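/- Let n ≥ 1 and let A : ℝ → Mₙ(ℝ) be continuously differentiable on [0,1]. Suppose that for every continuous f : [0,1] → ℝⁿ with ∫₀¹ f(s) ds = 0 and every u ∈ [0,1] one has (A'(u))ᵀ · (∫ᵤ¹ f(s) ds) = ( A(u)ᵀ + A(u) ) · f(u) (as vectors in ℝⁿ). Then A is constant on [0,1] and A(u)ᵀ = −A(u) for every u ∈ [0,1]. -/

import Mathlib

/-!
Testing the condition with `f s = g s • eⱼ`, where `∫₀¹ g = 0` and `G u = ∫ᵤ¹ g`, gives the scalar
identities `A'(u)ⱼᵢ · G(u) = (A(u)ⱼᵢ + A(u)ᵢⱼ) · g(u)`. For `g = s - 1/2` and `g = s² - 1/3` this is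
a linear system in `A'(u)ⱼᵢ` and `A(u)ⱼᵢ + A(u)ᵢⱼ` with determinant `u²(1-u)²/6`, so both vanish on
`(0,1)`; at the endpoints the first identity alone kills the symmetric part. Hence `A` is
skew-symmetric, and constant on `[0,1]` because its derivative vanishes on `(0,1)`.
-/

open MeasureTheory Set

theorem eq_of_hasDerivAt_zero_on_Ioo {f : ℝ → ℝ} {a b : ℝ} (hf : ContinuousOn f (Icc a b))
    (hf' : ∀ x ∈ Ioo a b, HasDerivAt f 0 x) {x y : ℝ} (hx : x ∈ Icc a b) (hy : y ∈ Icc a b) :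
    f x = f y := by
  wlog hxy : x ≤ y generalizing x y
  · exact (this hy hx (le_of_not_ge hxy)).symm
  have hderiv : ∀ z ∈ interior (Icc a b), HasDerivWithinAt f 0 (interior (Icc a b)) z := by
    rw [interior_Icc]
    exact fun z hz => (hf' z hz).hasDerivWithinAt
  exact le_antisymm
    (monotoneOn_of_hasDerivWithinAt_nonneg (convex_Icc a b) hf hderiv (fun _ _ => le_rfl) hx hy hxy)
    (antitoneOn_of_hasDerivWithinAt_nonpos (convex_Icc a b) hf hderiv (fun _ _ => le_rfl) hx hy hxy)

theorem integral_sub_one_half (u : ℝ) : ∫ s in u..1, (s - 1 / 2) = u * (1 - u) / 2 := by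
  simp [intervalIntegral.integral_sub, integral_id]
  ring

theorem integral_sq_sub_one_third (u : ℝ) : ∫ s in u..1, (s ^ 2 - 1 / 3) = (u - u ^ 3) / 3 := by
  simp [intervalIntegral.integral_sub, integral_pow]
  ring

theorem eq_zero_of_test_polynomial_identities {a s u : ℝ} (hu : u ∈ Icc 0 1)
    (h₁ : a * (u * (1 - u) / 2) = s * (u - 1 / 2))
    (h₂ : a * ((u - u ^ 3) / 3) = s * (u ^ 2 - 1 / 3)) :
    s = 0 ∧ (u ∈ Ioo 0 1 → a = 0) := by
  have hs : s * (u ^ 2 * (1 - u) ^ 2) = 0 := by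
    linear_combination (-6) * ((u - u ^ 3) / 3 * h₁ - u * (1 - u) / 2 * h₂)
  have ha : a * (u ^ 2 * (1 - u) ^ 2) = 0 := by
    linear_combination 6 * (u - 1 / 2) * h₂ - 6 * (u ^ 2 - 1 / 3) * h₁
  have hpos : ∀ {v : ℝ}, v ∈ Ioo 0 1 → v ^ 2 * (1 - v) ^ 2 ≠ 0 := fun ⟨h0, h1⟩ => by
    have := sub_pos.2 h1
    positivity
  refine ⟨?_, fun hu' => (mul_eq_zero.mp ha).resolve_right (hpos hu')⟩
  rcases hu.1.eq_or_lt with rfl | h0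
  · linarith
  rcases hu.2.eq_or_lt with rfl | h1
  · linarith
  exact (mul_eq_zero.mp hs).resolve_right (hpos ⟨h0, h1⟩)

theorem transpose_deriv_mul_integral_eq {n : ℕ} {A A' : ℝ → Fin n → Fin n → ℝ}
    (h : ∀ f : ℝ → Fin n → ℝ, ContinuousOn f (Icc 0 1) →
      (∫ s in (0:ℝ)..(1:ℝ), f s) = 0 →
      ∀ u ∈ Icc (0:ℝ) 1, ∀ i,
        (∑ j, A' u j i * (∫ s in u..(1:ℝ), f s) j) =
          ∑ j, (A u j i + A u i j) * f u j)
    {g : ℝ → ℝ} (hg : Continuous g) (hg₀ : ∫ s in (0:ℝ)..1, g s = 0)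
    {u : ℝ} (hu : u ∈ Icc (0:ℝ) 1) (i j : Fin n) :
    A' u j i * ∫ s in u..1, g s = (A u j i + A u i j) * g u := by
  have := h (fun s => g s • Pi.single j 1) (hg.smul continuous_const).continuousOn
    (by simp [hg₀]) u hu i
  simpa [intervalIntegral.integral_smul_const, Pi.single_apply] using this

theorem constant_and_skew_of_orthogonality
    (n : ℕ)
    (A A' : ℝ → Fin n → Fin n → ℝ)
    (hderiv : ∀ u ∈ Icc (0:ℝ) 1, ∀ i j,
      HasDerivWithinAt (fun t => A t i j) (A' u i j) (Icc 0 1) u)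
    (h : ∀ f : ℝ → Fin n → ℝ, ContinuousOn f (Icc 0 1) →
      (∫ s in (0:ℝ)..(1:ℝ), f s) = 0 →
      ∀ u ∈ Icc (0:ℝ) 1, ∀ i,
        (∑ j, A' u j i * (∫ s in u..(1:ℝ), f s) j) =
          ∑ j, (A u j i + A u i j) * f u j) :
    (∀ u ∈ Icc (0:ℝ) 1, ∀ v ∈ Icc (0:ℝ) 1, A u = A v) ∧
      (∀ u ∈ Icc (0:ℝ) 1, ∀ i j, A u j i = - A u i j) := by
  have hvanish : ∀ u ∈ Icc (0:ℝ) 1, ∀ i j,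
      A u j i + A u i j = 0 ∧ (u ∈ Ioo 0 1 → A' u j i = 0) := fun u hu i j => by
    have h₁ := transpose_deriv_mul_integral_eq h (g := fun s => s - 1 / 2) (by fun_prop)
      (by norm_num [integral_sub_one_half]) hu i j
    have h₂ := transpose_deriv_mul_integral_eq h (g := fun s => s ^ 2 - 1 / 3) (by fun_prop)
      (by norm_num [integral_sq_sub_one_third]) hu i j
    rw [integral_sub_one_half] at h₁
    rw [integral_sq_sub_one_third] at h₂
    exact eq_zero_of_test_polynomial_identities hu h₁ h₂
  refine ⟨fun u hu v hv => funext₂ fun i j => ?_,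
    fun u hu i j => eq_neg_of_add_eq_zero_left (hvanish u hu i j).1⟩
  refine eq_of_hasDerivAt_zero_on_Ioo (fun x hx => (hderiv x hx i j).continuousWithinAt)
    (fun x hx => ?_) hu hv
  rw [← (hvanish x (Ioo_subset_Icc_self hx) j i).2 hx]
  exact (hderiv x (Ioo_subset_Icc_self hx) i j).hasDerivAt (Icc_mem_nhds hx.1 hx.2)
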